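/- For real constants a, b not both zero, ∫_0^{2π} ∫_0^1 cos(ar cos φ + br sin φ) (1/r + cos φ) r dφ dr = 2π ∫_0^1 J₀(√(a²+b²) r) dr, where J₀ is the Bessel function of the first kind of order 0. -/

import Mathlib

/-!
Expanding `cos (c cos φ)` in its Taylor series and integrating termwise against the Wallis
integrals `∫₀^{2π} cos^{2s} = 2π (2s)! / (4^s (s!)²)` gives `2π J₀(c)`. Writing
`a cos φ + b sin φ = √(a²+b²) cos (φ - θ)` and using periodicity reduces the zeroth Fourier
coefficient of `cos (a r cos φ + b r sin φ)` to this case, while its first coefficient against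
`cos φ` vanishes because the integrand changes sign under `φ ↦ φ + π`.
-/

open Real MeasureTheory

/-- The Bessel function of the first kind of order `0`. -/
noncomputable def besselJ0 (x : ℝ) : ℝ :=
  ∑' s : ℕ, (-1) ^ s * (x / 2) ^ (2 * s) / ((Nat.factorial s : ℝ)) ^ 2

theorem integral_cos_pow_two_mul (s : ℕ) :
    ∫ φ in (0:ℝ)..2 * π, cos φ ^ (2 * s)
      = 2 * π * ((2 * s).factorial / (4 ^ s * (s.factorial : ℝ) ^ 2)) := by
  induction s with
  | zero => simp
  | succ k ih =>
    rw [show 2 * (k + 1) = 2 * k + 2 by ring, integral_cos_pow, ih]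
    simp only [sin_two_pi, sin_zero, mul_zero, sub_zero, zero_div, zero_add]
    rw [show 2 * k + 2 = (2 * k + 1) + 1 by ring, Nat.factorial_succ, Nat.factorial_succ,
      Nat.factorial_succ]
    push_cast
    field_simp
    ring

theorem integral_cos_mul_cos_eq_besselJ0 (c : ℝ) :
    ∫ φ in (0:ℝ)..2 * π, cos (c * cos φ) = 2 * π * besselJ0 c := by
  have hterm (s : ℕ) :
      ∫ φ in (0:ℝ)..2 * π, (-1) ^ s * (c * cos φ) ^ (2 * s) / (2 * s).factorial
        = 2 * π * ((-1) ^ s * (c / 2) ^ (2 * s) / (s.factorial : ℝ) ^ 2) := by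
    have h (φ : ℝ) : (-1) ^ s * (c * cos φ) ^ (2 * s) / (2 * s).factorial
        = (-1) ^ s * c ^ (2 * s) / (2 * s).factorial * cos φ ^ (2 * s) := by ring
    simp_rw [h]
    rw [intervalIntegral.integral_const_mul, integral_cos_pow_two_mul, div_pow, pow_mul (2 : ℝ)]
    field_simp
    norm_num
  have hbound : Summable fun s : ℕ => |c| ^ (2 * s) / (2 * s).factorial := by
    simpa [Function.comp_def] using (summable_pow_div_factorial |c|).comp_injective
      (mul_right_injective₀ two_ne_zero)
  have hsum : HasSum
      (fun s : ℕ =>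
        ∫ φ in (0:ℝ)..2 * π, (-1) ^ s * (c * cos φ) ^ (2 * s) / (2 * s).factorial)
      (∫ φ in (0:ℝ)..2 * π, cos (c * cos φ)) := by
    refine intervalIntegral.hasSum_integral_of_dominated_convergence
      (fun s _ => |c| ^ (2 * s) / (2 * s).factorial) (fun s => ?_) (fun s => ?_)
      (ae_of_all _ fun _ _ => hbound) intervalIntegrable_const
      (ae_of_all _ fun φ _ => hasSum_cos (c * cos φ))
    · exact (by fun_prop : Continuous _).aestronglyMeasurable
    · refine ae_of_all _ fun φ _ => ?_
      rw [norm_div, norm_mul, norm_pow, norm_pow, norm_neg, norm_one, one_pow, one_mul,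
        Real.norm_natCast, norm_mul, Real.norm_eq_abs, Real.norm_eq_abs, mul_pow]
      gcongr
      exact mul_le_of_le_one_right (by positivity)
        (pow_le_one₀ (abs_nonneg _) (abs_cos_le_one φ))
  rw [← hsum.tsum_eq]
  simp_rw [hterm]
  rw [tsum_mul_left, besselJ0]

theorem Function.Periodic.intervalIntegral_comp_sub_eq {E : Type*} [NormedAddCommGroup E]
    [NormedSpace ℝ E] {f : ℝ → E} {T : ℝ} (hf : Function.Periodic f T) (t θ : ℝ) :
    ∫ x in t..t + T, f (x - θ) = ∫ x in t..t + T, f x := by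
  rw [intervalIntegral.integral_comp_sub_right, add_sub_right_comm, hf.intervalIntegral_add_eq]

theorem Function.Antiperiodic.intervalIntegral_add_two_mul_eq_zero {E : Type*}
    [NormedAddCommGroup E] [NormedSpace ℝ E] {f : ℝ → E} {T : ℝ}
    (hf : Function.Antiperiodic f T) (t : ℝ) : ∫ x in t..t + 2 * T, f x = 0 := by
  by_cases hint : IntervalIntegrable f volume t (t + 2 * T)
  · have hmid : t + T ∈ Set.uIcc t (t + 2 * T) := by
      rcases le_total 0 T with hT | hT
      · exact Set.mem_uIcc.2 (Or.inl ⟨by linarith, by linarith⟩)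
      · exact Set.mem_uIcc.2 (Or.inr ⟨by linarith, by linarith⟩)
    have hleft := hint.mono_set (Set.uIcc_subset_uIcc Set.left_mem_uIcc hmid)
    have hright := hint.mono_set (Set.uIcc_subset_uIcc hmid Set.right_mem_uIcc)
    have hshift : ∫ x in t + T..t + 2 * T, f x = ∫ x in t..t + T, f (x + T) := by
      rw [intervalIntegral.integral_comp_add_right]
      ring_nf
    rw [← intervalIntegral.integral_add_adjacent_intervals hleft hright, hshift]
    simp only [hf _, intervalIntegral.integral_neg, add_neg_cancel]
  · exact intervalIntegral.integral_undef hint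

theorem exists_mul_cos_add_mul_sin_eq (u v : ℝ) :
    ∃ θ, ∀ φ, u * cos φ + v * sin φ = √(u ^ 2 + v ^ 2) * cos (φ - θ) := by
  set z : ℂ := u + v * Complex.I
  have hnorm : ‖z‖ = √(u ^ 2 + v ^ 2) := Complex.norm_add_mul_I u v
  have hre : ‖z‖ * cos z.arg = u := by simp [Complex.norm_mul_cos_arg, z]
  have him : ‖z‖ * sin z.arg = v := by simp [Complex.norm_mul_sin_arg, z]
  refine ⟨z.arg, fun φ => ?_⟩
  rw [cos_sub, ← hnorm]
  linear_combination (-cos φ) * hre - sin φ * him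

theorem integral_cos_mul_cos_add_mul_sin_eq_besselJ0 (u v : ℝ) :
    ∫ φ in (0:ℝ)..2 * π, cos (u * cos φ + v * sin φ)
      = 2 * π * besselJ0 √(u ^ 2 + v ^ 2) := by
  obtain ⟨θ, hθ⟩ := exists_mul_cos_add_mul_sin_eq u v
  have hper : Function.Periodic (fun φ => cos (√(u ^ 2 + v ^ 2) * cos φ)) (2 * π) :=
    fun φ => by simp only [cos_add_two_pi]
  simp_rw [hθ]
  have hshift := hper.intervalIntegral_comp_sub_eq 0 θ
  rw [zero_add] at hshift
  rw [hshift, integral_cos_mul_cos_eq_besselJ0]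

theorem integral_cos_mul_cos_add_mul_sin_mul_cos_eq_zero (u v : ℝ) :
    ∫ φ in (0:ℝ)..2 * π, cos (u * cos φ + v * sin φ) * cos φ = 0 := by
  have hanti : Function.Antiperiodic (fun φ => cos (u * cos φ + v * sin φ) * cos φ) π :=
    fun φ => by simp only [cos_add_pi, sin_add_pi, mul_neg, ← neg_add, cos_neg]
  simpa using hanti.intervalIntegral_add_two_mul_eq_zero 0

theorem oscillatory_integral_bessel_general (a b : ℝ) :
    (∫ r in (0:ℝ)..1, ∫ φ in (0:ℝ)..(2 * π),
        Real.cos (a * r * Real.cos φ + b * r * Real.sin φ)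
          * (1 / r + Real.cos φ) * r)
      = 2 * π * ∫ r in (0:ℝ)..1, besselJ0 (Real.sqrt (a ^ 2 + b ^ 2) * r) := by
  rw [← intervalIntegral.integral_const_mul]
  refine intervalIntegral.integral_congr_ae (ae_of_all _ fun r hr => ?_)
  rw [Set.uIoc_of_le zero_le_one] at hr
  have hsplit (φ : ℝ) : cos (a * r * cos φ + b * r * sin φ) * (1 / r + cos φ) * r
      = cos (a * r * cos φ + b * r * sin φ)
        + r * (cos (a * r * cos φ + b * r * sin φ) * cos φ) := by
    field_simp [hr.1.ne']
  have hscale : √((a * r) ^ 2 + (b * r) ^ 2) = √(a ^ 2 + b ^ 2) * r := by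
    rw [mul_pow, mul_pow, ← add_mul, sqrt_mul' _ (sq_nonneg r), sqrt_sq hr.1.le]
  simp_rw [hsplit]
  rw [intervalIntegral.integral_add (Continuous.intervalIntegrable (by fun_prop) _ _)
      (Continuous.intervalIntegrable (by fun_prop) _ _),
    intervalIntegral.integral_const_mul, integral_cos_mul_cos_add_mul_sin_eq_besselJ0,
    integral_cos_mul_cos_add_mul_sin_mul_cos_eq_zero, hscale, mul_zero, add_zero]

/-- For `(a,b) ≠ (0,0)`,
`∫_0^1 ∫_0^{2π} cos(ar cos φ + br sin φ)(1/r + cos φ) r dφ dr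
  = 2π ∫_0^1 J₀(√(a²+b²) r) dr`. -/
theorem oscillatory_integral_bessel (a b : ℝ) (hab : a ^ 2 + b ^ 2 ≠ 0) :
    (∫ r in (0:ℝ)..1, ∫ φ in (0:ℝ)..(2 * π),
        Real.cos (a * r * Real.cos φ + b * r * Real.sin φ)
          * (1 / r + Real.cos φ) * r)
      = 2 * π * ∫ r in (0:ℝ)..1, besselJ0 (Real.sqrt (a ^ 2 + b ^ 2) * r) :=
  oscillatory_integral_bessel_general a b
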